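/- Let X be a set and σ: X → X a map with proper forward orbits, meaning that for every x ∈ X and every finite subset F ⊆ X, the set {n ∈ ℕ : σ^n(x) ∈ F} is finite. Let a: X → ℕ be finitely supported and let n ≥ ‖a‖₁ · ‖t(a)‖₁. Then the support of s_n(a) has cardinality exactly ‖a‖₁. -/
import Mathlib

/-- ℓ¹-norm of an ℕ-valued 0-chain: `‖a‖₁ = Σ_x a x`. -/
noncomputable def l1Norm {X : Type*} (a : X →₀ ℕ) : ℕ := a.sum fun _ n => n

/-- ℓ¹-distance `‖a - b‖₁ = Σ_x |a x - b x|` (with `|a x - b x|` computed via truncated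
subtraction on ℕ as `(a x - b x) + (b x - a x)`). -/
noncomputable def l1Dist {X : Type*} (a b : X →₀ ℕ) : ℕ := l1Norm ((a - b) + (b - a))

/-- `a ∧ b`: the pointwise minimum of two ℕ-valued 0-chains. -/
noncomputable def chainMin {X : Type*} (a b : X →₀ ℕ) : X →₀ ℕ :=
  Finsupp.zipWith min (min_self 0) a b

/-- `b(a)`: the characteristic function of the support of `a`. -/
noncomputable def bChain {X : Type*} (a : X →₀ ℕ) : X →₀ ℕ :=
  Finsupp.onFinset a.support (fun x => if a x = 0 then 0 else 1)
    (fun x h => Finsupp.mem_support_iff.mpr (by intro hx; simp [hx] at h))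

/-- `t(a) := a - b(a)`. -/
noncomputable def tChain {X : Type*} (a : X →₀ ℕ) : X →₀ ℕ := a - bChain a

/-- The flow map `s₁`: `s₁(a)(x) = b(a)(x) + Σ_{y : σ y = x} t(a)(y)`. -/
noncomputable def flowStep {X : Type*} (σ : X → X) (a : X →₀ ℕ) : X →₀ ℕ :=
  bChain a + (tChain a).sum fun y n => Finsupp.single (σ y) n

section Aux
open scoped Classical
variable {X : Type*}

noncomputable def pushf (σ : X → X) (f : X →₀ ℕ) : X →₀ ℕ :=
  f.sum fun y n => Finsupp.single (σ y) n

lemma bChain_apply (a : X →₀ ℕ) (x : X) : bChain a x = if a x = 0 then 0 else 1 := rfl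

lemma tChain_apply (a : X →₀ ℕ) (x : X) : tChain a x = a x - bChain a x := by
  simp [tChain, Finsupp.tsub_apply]

lemma bChain_add_tChain (a : X →₀ ℕ) : bChain a + tChain a = a := by
  ext x
  simp only [Finsupp.add_apply, tChain_apply, bChain_apply]
  by_cases h : a x = 0 <;> simp [h] <;> omega

lemma support_bChain (a : X →₀ ℕ) : (bChain a).support = a.support := by
  ext x; simp [Finsupp.mem_support_iff, bChain_apply]

lemma bChain_congr {a c : X →₀ ℕ} (h : a.support = c.support) : bChain a = bChain c := by
  ext x
  simp only [bChain_apply]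
  have hiff : a x = 0 ↔ c x = 0 := by
    rw [← not_iff_not]
    simp only [← Finsupp.mem_support_iff, h]
  by_cases hx : a x = 0
  · simp [hx, hiff.mp hx]
  · have : c x ≠ 0 := fun hc => hx (hiff.mpr hc)
    simp [hx, this]

lemma l1Norm_add (f g : X →₀ ℕ) : l1Norm (f + g) = l1Norm f + l1Norm g := by
  unfold l1Norm
  rw [Finsupp.sum_add_index] <;> simp

lemma l1Norm_eq_zero {f : X →₀ ℕ} : l1Norm f = 0 ↔ f = 0 := by
  unfold l1Norm
  rw [Finsupp.sum, Finset.sum_eq_zero_iff]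
  constructor
  · intro h; ext x
    by_cases hx : f x = 0
    · simp [hx]
    · exact absurd (h x (Finsupp.mem_support_iff.mpr hx)) hx
  · intro h; simp [h]

lemma l1Norm_pushf (σ : X → X) (f : X →₀ ℕ) : l1Norm (pushf σ f) = l1Norm f := by
  unfold l1Norm pushf
  rw [Finsupp.sum_sum_index] <;> simp [Finsupp.sum_single_index]

lemma l1Norm_bChain (a : X →₀ ℕ) : l1Norm (bChain a) = a.support.card := by
  unfold l1Norm
  rw [Finsupp.sum]
  rw [support_bChain]
  rw [Finset.card_eq_sum_ones]
  apply Finset.sum_congr rfl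
  intro x hx
  simp [bChain_apply, Finsupp.mem_support_iff.mp hx]

lemma l1Norm_split (a : X →₀ ℕ) : l1Norm a = a.support.card + l1Norm (tChain a) := by
  conv_lhs => rw [← bChain_add_tChain a]
  rw [l1Norm_add, l1Norm_bChain]

lemma card_support_le (a : X →₀ ℕ) : a.support.card ≤ l1Norm a := by
  rw [l1Norm_split]; omega

lemma flowStep_eq (σ : X → X) (a : X →₀ ℕ) :
    flowStep σ a = bChain a + pushf σ (tChain a) := rfl

lemma l1Norm_flowStep (σ : X → X) (a : X →₀ ℕ) : l1Norm (flowStep σ a) = l1Norm a := by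
  rw [flowStep_eq, l1Norm_add, l1Norm_pushf, l1Norm_bChain, ← l1Norm_split]

lemma support_add_eq (f g : X →₀ ℕ) : (f + g).support = f.support ∪ g.support := by
  ext x
  simp only [Finsupp.mem_support_iff, Finset.mem_union, Finsupp.add_apply]
  omega

lemma support_flowStep (σ : X → X) (a : X →₀ ℕ) :
    (flowStep σ a).support = a.support ∪ (pushf σ (tChain a)).support := by
  rw [flowStep_eq, support_add_eq, support_bChain]

lemma support_subset_flowStep (σ : X → X) (a : X →₀ ℕ) :
    a.support ⊆ (flowStep σ a).support := by
  rw [support_flowStep]; exact Finset.subset_union_left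

lemma pushf_apply_ne_zero (σ : X → X) {f : X →₀ ℕ} {y : X} (hy : f y ≠ 0) :
    pushf σ f (σ y) ≠ 0 := by
  have hmem : y ∈ f.support := Finsupp.mem_support_iff.mpr hy
  have heq : pushf σ f (σ y) = ∑ y' ∈ f.support, (Finsupp.single (σ y') (f y')) (σ y) := by
    simp [pushf, Finsupp.sum_apply, Finsupp.sum]
  rw [heq]
  intro h0
  rw [Finset.sum_eq_zero_iff] at h0
  have := h0 y hmem
  simp at this
  exact hy this

lemma tChain_flowStep (σ : X → X) {a : X →₀ ℕ}
    (h : (flowStep σ a).support = a.support) :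
    tChain (flowStep σ a) = pushf σ (tChain a) := by
  have hb : bChain (flowStep σ a) = bChain a := bChain_congr h
  rw [tChain, hb, flowStep_eq, add_tsub_cancel_left]

lemma support_tChain_subset (a : X →₀ ℕ) : (tChain a).support ⊆ a.support := by
  intro x hx
  simp only [Finsupp.mem_support_iff, tChain_apply] at hx ⊢
  omega


lemma l1Norm_zero : l1Norm (0 : X →₀ ℕ) = 0 := by simp [l1Norm]

lemma flowStep_fixed (σ : X → X) {a : X →₀ ℕ} (ht : tChain a = 0) : flowStep σ a = a := by
  have := bChain_add_tChain a
  rw [ht, add_zero] at this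
  rw [flowStep_eq, ht]
  simpa [pushf] using this

lemma l1Norm_iter (σ : X → X) (a : X →₀ ℕ) (j : ℕ) :
    l1Norm ((flowStep σ)^[j] a) = l1Norm a := by
  induction j with
  | zero => rfl
  | succ j ih => rw [Function.iterate_succ_apply', l1Norm_flowStep, ih]

lemma support_iter_mono (σ : X → X) (a : X →₀ ℕ) (j : ℕ) :
    a.support ⊆ ((flowStep σ)^[j] a).support := by
  induction j with
  | zero => exact Finset.Subset.refl _
  | succ j ih =>
    rw [Function.iterate_succ_apply']
    exact fun x hx => support_subset_flowStep σ _ (ih hx)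

lemma no_periodic (σ : X → X)
    (hproper : ∀ (x : X) (F : Finset X), {n : ℕ | σ^[n] x ∈ F}.Finite)
    {z : X} {p : ℕ} (hp : 0 < p) (hz : σ^[p] z = z) : False := by
  have hk : ∀ k, σ^[k * p] z = z := by
    intro k
    induction k with
    | zero => simp
    | succ k ih => rw [Nat.succ_mul, Function.iterate_add_apply, hz, ih]
  have hfin := hproper z {z}
  have hinf : {n : ℕ | σ^[n] z ∈ ({z} : Finset X)}.Infinite := by
    apply Set.infinite_of_injective_forall_mem (f := fun k : ℕ => k * p)
    · intro k1 k2 h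
      exact Nat.eq_of_mul_eq_mul_right hp h
    · intro k
      simp [hk k]
  exact hinf hfin

lemma exists_periodic_of_stay (σ : X → X) {y : X} {S : Finset X}
    (h : ∀ j ≤ S.card, σ^[j] y ∈ S) : ∃ z p, 0 < p ∧ σ^[p] z = z := by
  have hmaps : ∀ j ∈ Finset.range (S.card + 1), σ^[j] y ∈ S := by
    intro j hj
    exact h j (by simpa using Nat.lt_succ_iff.mp (Finset.mem_range.mp hj))
  have hcard : S.card < (Finset.range (S.card + 1)).card := by simp
  obtain ⟨i, hi, i', hi', hne, heq⟩ :=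
    Finset.exists_ne_map_eq_of_card_lt_of_maps_to hcard hmaps
  rcases Nat.lt_or_ge i i' with hlt | hge
  · refine ⟨σ^[i] y, i' - i, by omega, ?_⟩
    rw [← Function.iterate_add_apply, show i' - i + i = i' by omega, heq]
  · have hlt : i' < i := by omega
    refine ⟨σ^[i'] y, i - i', by omega, ?_⟩
    rw [← Function.iterate_add_apply, show i - i' + i' = i by omega, ← heq]

lemma support_grows (σ : X → X)
    (hproper : ∀ (x : X) (F : Finset X), {n : ℕ | σ^[n] x ∈ F}.Finite)
    {a : X →₀ ℕ} (ht : tChain a ≠ 0) :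
    ∃ j ≤ a.support.card, ((flowStep σ)^[j] a).support ≠ a.support := by
  by_contra hcon
  push_neg at hcon
  -- hcon : ∀ j ≤ card, supp (F^j a) = supp a
  obtain ⟨y, hy⟩ : ∃ y, y ∈ (tChain a).support := by
    rcases Finset.eq_empty_or_nonempty (tChain a).support with he | ⟨y, hy⟩
    · exact absurd (Finsupp.support_eq_empty.mp he) ht
    · exact ⟨y, hy⟩
  have key : ∀ j ≤ a.support.card, σ^[j] y ∈ (tChain ((flowStep σ)^[j] a)).support := by
    intro j hj
    induction j with
    | zero => simpa using hy
    | succ j ih =>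
      have hj' : j ≤ a.support.card := by omega
      have hprev := ih hj'
      have heq : ((flowStep σ)^[j + 1] a).support = ((flowStep σ)^[j] a).support := by
        rw [hcon (j + 1) hj, hcon j hj']
      rw [Function.iterate_succ_apply'] at heq
      have htc := tChain_flowStep σ heq
      rw [Function.iterate_succ_apply', htc]
      rw [Finsupp.mem_support_iff,
        show σ^[j + 1] y = σ (σ^[j] y) from Function.iterate_succ_apply' σ j y]
      exact pushf_apply_ne_zero σ (Finsupp.mem_support_iff.mp hprev)
  have hin : ∀ j ≤ a.support.card, σ^[j] y ∈ a.support := by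
    intro j hj
    have := key j hj
    have h2 := support_tChain_subset ((flowStep σ)^[j] a) this
    rwa [hcon j hj] at h2
  obtain ⟨z, p, hp, hz⟩ := exists_periodic_of_stay σ hin
  exact no_periodic σ hproper hp hz

lemma aux_main (σ : X → X)
    (hproper : ∀ (x : X) (F : Finset X), {n : ℕ | σ^[n] x ∈ F}.Finite) :
    ∀ (m : ℕ) (a : X →₀ ℕ) (n : ℕ), l1Norm (tChain a) ≤ m → m * l1Norm a ≤ n →
      ((flowStep σ)^[n] a).support.card = l1Norm a := by
  intro m
  induction m with
  | zero =>
    intro a n h0 _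
    have ht : tChain a = 0 := l1Norm_eq_zero.mp (Nat.le_zero.mp h0)
    have hfix : (flowStep σ)^[n] a = a :=
      Function.iterate_fixed (flowStep_fixed σ ht) n
    rw [hfix]
    have := l1Norm_split a
    rw [ht, l1Norm_zero] at this
    omega
  | succ m ih =>
    intro a n hm hn
    by_cases hle : l1Norm (tChain a) ≤ m
    · refine ih a n hle (le_trans ?_ hn)
      exact Nat.mul_le_mul_right _ (Nat.le_succ m)
    · have ht : tChain a ≠ 0 := by
        intro h
        rw [h, l1Norm_zero] at hle
        omega
      obtain ⟨j, hjcard, hjne⟩ := support_grows σ hproper ht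
      set c := (flowStep σ)^[j] a with hc
      have hLc : l1Norm c = l1Norm a := l1Norm_iter σ a j
      have hsub : a.support ⊆ c.support := support_iter_mono σ a j
      have hcard : a.support.card < c.support.card :=
        Finset.card_lt_card (Finset.ssubset_iff_subset_ne.mpr ⟨hsub, (Ne.symm hjne)⟩)
      have h1 := l1Norm_split a
      have h2 := l1Norm_split c
      rw [hLc] at h2
      have htc : l1Norm (tChain c) ≤ m := by omega
      have hjL : j ≤ l1Norm a := le_trans hjcard (card_support_le a)
      have hexp : (m + 1) * l1Norm a = m * l1Norm a + l1Norm a := by ring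
      have hn' : m * l1Norm c ≤ n - j := by rw [hLc]; omega
      have := ih c (n - j) htc hn'
      rw [show n = (n - j) + j by omega, Function.iterate_add_apply]
      rw [← hc, this, hLc]

end Aux

/-- If `σ` has proper forward orbits and `n ≥ ‖a‖₁ ⬝ ‖t(a)‖₁`, then the support of
`s_n(a)` has cardinality exactly `‖a‖₁`. -/
theorem card_support_flowIter {X : Type*} (σ : X → X)
    (hproper : ∀ (x : X) (F : Finset X), {n : ℕ | σ^[n] x ∈ F}.Finite)
    (a : X →₀ ℕ) (n : ℕ) (hn : l1Norm a * l1Norm (tChain a) ≤ n) :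
    ((flowStep σ)^[n] a).support.card = l1Norm a :=
  aux_main σ hproper (l1Norm (tChain a)) a n (le_refl _) (by rw [mul_comm]; exact hn)
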